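/- arXiv:1007.5124 — 2 statements merged into one kernel-verified Lean document; each statement's English description precedes it below -/
import Mathlib

section
/- Let 𝒪 be an order in an imaginary quadratic field M and 𝔞 a fractional 𝒪-ideal. The following are equivalent: (1) 𝔞 is projective as an 𝒪-module; (2) 𝔞 is locally principal, i.e. for every prime l the localization 𝔞_l is a principal 𝒪_l-ideal; (3) 𝔞 is a proper 𝒪-ideal, i.e. 𝒪 = {α ∈ M : α𝔞 ⊆ 𝔞}. -/
/-!
Projective ⇒ invertible: since any two elements of `𝔞` are commensurable, every `𝒪`-linear form
on `𝔞` is multiplication by an element of `M`, so a dual basis of the projective module `𝔞`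
produces `∑ wᵢ yᵢ = 1` with `wᵢ ∈ 𝔞` and `yᵢ 𝔞 ⊆ 𝒪`. Invertible ⇒ locally principal: at a
maximal ideal `P` some `wᵢ yᵢ ∈ 𝒪` lies outside `P`, and then `wᵢ` generates `𝔞` at `P`.
Locally principal ⇒ proper: a multiplier of `𝔞` lies in `𝒪` after clearing a denominator
outside each maximal ideal, hence lies in `𝒪`. Proper ⇒ invertible: write `𝔞 = ℤα + ℤβ`; then
`τ = β/α` is a root of a primitive integer quadratic `Aτ² + Bτ + C`, properness puts `Aτ` in `𝒪`,
and the products of `α, β` with `A/α` and `(B + Aτ)/α` give `A, B, C`, hence `1`, inside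
`𝔞 · (𝒪 : 𝔞)`. Invertible fractional ideals are projective.
-/

open Module Submodule nonZeroDivisors

namespace Submodule

section Algebra

variable {R A : Type*} [CommSemiring R] [CommSemiring A] [Algebra R A]

theorem isUnit_iff_one_mem_mul_one_div {I : Submodule R A} : IsUnit I ↔ 1 ∈ I * (1 / I) := by
  refine ⟨fun ⟨u, hu⟩ => ?_, fun h => IsUnit.of_mul_eq_one (1 / I) ?_⟩
  · have hinv : (↑u⁻¹ : Submodule R A) ≤ 1 / I := by
      rw [le_div_iff_mul_le, ← hu, Units.inv_mul]
    exact mul_le_mul_right hinv I (by rw [← hu, Units.mul_inv]; exact one_le.mp le_rfl)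
  · exact le_antisymm mul_one_div_le_one (one_le.mpr h)

theorem mem_div_span_iff {I : Submodule R A} {s : Set A} {y : A} :
    y ∈ I / span R s ↔ ∀ x ∈ s, y * x ∈ I := by
  refine ⟨fun h x hx => h x (subset_span hx), fun h z hz => ?_⟩
  induction hz using span_induction with
  | mem x hx => exact h x hx
  | zero => simp
  | add x z _ _ hx hz => rw [mul_add]; exact add_mem hx hz
  | smul r x _ hx => rw [mul_smul_comm]; exact I.smul_mem r hx

end Algebra

theorem mem_of_forall_isMaximal_exists_smul_mem {R M : Type*} [CommRing R] [AddCommGroup M]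
    [Module R M] {N : Submodule R M} {x : M}
    (h : ∀ P : Ideal R, P.IsMaximal → ∃ s ∉ P, s • x ∈ N) : x ∈ N := by
  by_contra hx
  have hcolon : N.colon {x} ≠ ⊤ := by
    rwa [Ne, Ideal.eq_top_iff_one, mem_colon_singleton, one_smul]
  obtain ⟨P, hP, hle⟩ := Ideal.exists_le_maximal _ hcolon
  obtain ⟨s, hs, hsx⟩ := h P hP
  exact hs (hle (mem_colon_singleton.mpr hsx))

/-- The localization `N_P` at every maximal ideal `P` is generated by a single `x ∈ N`. -/
def IsLocallyPrincipal {R M : Type*} [CommRing R] [AddCommGroup M] [Module R M]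
    (N : Submodule R M) : Prop :=
  ∀ P : Ideal R, P.IsMaximal → ∃ x ∈ N, ∀ y ∈ N, ∃ o s : R, s ∉ P ∧ s • y = o • x

variable {R K : Type*} [CommRing R]

theorem IsLocallyPrincipal.of_isUnit [CommRing K] [Algebra R K] [FaithfulSMul R K]
    {a : Submodule R K} (h : IsUnit a) : a.IsLocallyPrincipal := by
  intro P hP
  rw [isUnit_iff_one_mem_mul_one_div] at h
  obtain ⟨x, hx, y, hy, hxy⟩ :
      ∃ x ∈ a, ∃ y ∈ 1 / a, x * y ∉ Submodule.map (Algebra.linearMap R K) P := by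
    by_contra! hle
    obtain ⟨p, hp, hp1⟩ := mem_map.mp (mul_le.mpr hle h)
    rw [Algebra.linearMap_apply, ← map_one (algebraMap R K),
      (FaithfulSMul.algebraMap_injective R K).eq_iff] at hp1
    exact hP.ne_top ((Ideal.eq_top_iff_one P).mpr (hp1 ▸ hp))
  obtain ⟨s, hs⟩ := mem_one.mp (mul_one_div_le_one (mul_mem_mul hx hy))
  refine ⟨x, hx, fun z hz => ?_⟩
  obtain ⟨o, ho⟩ := mem_one.mp (hy z hz)
  refine ⟨o, s, fun hsP => hxy (hs ▸ mem_map_of_mem hsP), ?_⟩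
  rw [Algebra.smul_def, Algebra.smul_def, hs, ho]
  ring

theorem IsLocallyPrincipal.div_self_eq_one [Field K] [Algebra R K] [FaithfulSMul R K]
    {a : Submodule R K} (h : a.IsLocallyPrincipal) (ha : a ≠ ⊥) : a / a = 1 := by
  refine le_antisymm (fun c hc => mem_of_forall_isMaximal_exists_smul_mem fun P hP => ?_)
    (le_div_iff_mul_le.mpr (one_mul a).le)
  obtain ⟨x, hx, hgen⟩ := h P hP
  have hx0 : x ≠ 0 := by
    rintro rfl
    obtain ⟨y, hy, hy0⟩ := a.ne_bot_iff.mp ha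
    obtain ⟨o, s, hs, hsy⟩ := hgen y hy
    rw [smul_zero, Algebra.smul_def, mul_eq_zero,
      map_eq_zero_iff _ (FaithfulSMul.algebraMap_injective R K)] at hsy
    exact hsy.elim (fun h0 => hs (h0 ▸ P.zero_mem)) hy0
  obtain ⟨o, s, hs, hsc⟩ := hgen (c * x) (hc x hx)
  refine ⟨s, hs, mem_one.mpr ⟨o, mul_right_cancel₀ hx0 ?_⟩⟩
  rw [← Algebra.smul_def, ← hsc, smul_mul_assoc]

section FractionRing

variable [Field K] [Algebra R K] [IsFractionRing R K]

theorem algebraMap_apply_mul_comm {a : Submodule R K} (f : a →ₗ[R] R) (x y : a) :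
    algebraMap R K (f x) * y = algebraMap R K (f y) * x := by
  obtain ⟨⟨r₁, s₁⟩, h₁⟩ := IsLocalization.surj R⁰ (x : K)
  obtain ⟨⟨r₂, s₂⟩, h₂⟩ := IsLocalization.surj R⁰ (y : K)
  simp only at h₁ h₂
  have hrel : ((s₂ : R) * r₁) • y = ((s₁ : R) * r₂) • x := by
    ext
    simp only [coe_smul, Algebra.smul_def, map_mul]
    linear_combination (algebraMap R K r₁) * h₂ - (algebraMap R K r₂) * h₁
  have hf := congrArg (fun z => algebraMap R K (f z)) hrel
  simp only [map_smul, smul_eq_mul, map_mul] at hf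
  have hs : algebraMap R K s₁ * algebraMap R K s₂ ≠ 0 :=
    mul_ne_zero (IsLocalization.map_units K s₁).ne_zero (IsLocalization.map_units K s₂).ne_zero
  apply mul_left_cancel₀ hs
  linear_combination (algebraMap R K (f x) * algebraMap R K s₁) * h₂
    - (algebraMap R K (f y) * algebraMap R K s₂) * h₁ - hf

theorem isUnit_of_projective {a : Submodule R K} (ha : a ≠ ⊥) [Module.Projective R a] :
    IsUnit a := by
  obtain ⟨s, hs⟩ := Module.projective_def.mp ‹Module.Projective R a›
  obtain ⟨z₀, hz₀, hz₀ne⟩ := a.ne_bot_iff.mp ha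
  set x₀ : a := ⟨z₀, hz₀⟩
  have hcoord (w : a) : algebraMap R K (s x₀ w) / z₀ ∈ 1 / a := fun z hz => by
    have := algebraMap_apply_mul_comm (Finsupp.lapply w ∘ₗ s) x₀ ⟨z, hz⟩
    simp only [LinearMap.coe_comp, Function.comp_apply, Finsupp.lapply_apply] at this
    refine mem_one.mpr ⟨s ⟨z, hz⟩ w, ?_⟩
    rw [div_mul_eq_mul_div, eq_div_iff hz₀ne]
    exact this.symm
  have hsum : ∑ w ∈ (s x₀).support, (w : K) * (algebraMap R K (s x₀ w) / z₀) = 1 := by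
    have h := congrArg (fun z : a => (z : K)) (hs x₀)
    simp only [Finsupp.linearCombination_apply, Finsupp.sum, coe_sum, coe_smul,
      Algebra.smul_def, id_eq] at h
    calc _ = (∑ w ∈ (s x₀).support, algebraMap R K (s x₀ w) * w) / z₀ := by
          rw [Finset.sum_div]
          exact Finset.sum_congr rfl fun w _ => by ring
      _ = 1 := by rw [h]; exact div_self hz₀ne
  rw [isUnit_iff_one_mem_mul_one_div, ← hsum]
  exact sum_mem fun w _ => mul_mem_mul w.2 (hcoord w)

end FractionRing

/-- With `τ = β / α`, the multiplier `γ = Aτ` of `a` lies in `R`, and `R(A/α) + R((B + γ)/α)` is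
an inverse of `a`. -/
theorem isUnit_span_pair_of_relation [Field K] [Algebra R K]
    {α β : K} {A B C u v w : R} (hα : α ≠ 0)
    (hrel : A • (β * β) + B • (α * β) + C • (α * α) = 0) (hABC : A * u + B * v + C * w = 1)
    (hproper : span R {α, β} / span R {α, β} ≤ 1) : IsUnit (span R {α, β}) := by
  set a := span R {α, β}
  simp only [Algebra.smul_def] at hrel
  have hαa : α ∈ a := subset_span (Set.mem_insert _ _)
  have hβa : β ∈ a := subset_span (Set.mem_insert_of_mem _ rfl)
  set γ := algebraMap R K A * β / α with hγ_def
  have hγα : γ * α = A • β := by rw [hγ_def, Algebra.smul_def]; field_simp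
  have hγβ : γ * β = -(B • β + C • α) := by
    rw [hγ_def, Algebra.smul_def, Algebra.smul_def]
    field_simp
    linear_combination hrel
  have hγ : γ ∈ (1 : Submodule R K) := hproper <| mem_div_span_iff.mpr <| by
    simp only [Set.forall_mem_insert, Set.mem_singleton_iff, forall_eq, hγα, hγβ]
    exact ⟨a.smul_mem A hβa, neg_mem (add_mem (a.smul_mem B hβa) (a.smul_mem C hαa))⟩
  set y₁ := algebraMap R K A / α with hy₁_def
  set y₂ := (algebraMap R K B + γ) / α with hy₂_def
  have hy₁α : α * y₁ = algebraMap R K A := by rw [hy₁_def]; field_simp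
  have hy₁β : β * y₁ = γ := by rw [hy₁_def, hγ_def]; ring
  have hy₂α : α * y₂ = algebraMap R K B + γ := by rw [hy₂_def]; field_simp
  have hy₂β : β * y₂ = -algebraMap R K C := by
    rw [hy₂_def, hγ_def]
    field_simp
    linear_combination hrel
  have mem_one_div {y : K} (hyα : α * y ∈ (1 : Submodule R K))
      (hyβ : β * y ∈ (1 : Submodule R K)) : y ∈ 1 / a := mem_div_span_iff.mpr <| by
    simp only [Set.forall_mem_insert, Set.mem_singleton_iff, forall_eq, mul_comm y]
    exact ⟨hyα, hyβ⟩
  have hy₁ : y₁ ∈ 1 / a := mem_one_div (hy₁α ▸ algebraMap_mem A) (hy₁β ▸ hγ)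
  have hy₂ : y₂ ∈ 1 / a :=
    mem_one_div (hy₂α ▸ add_mem (algebraMap_mem B) hγ) (hy₂β ▸ neg_mem (algebraMap_mem C))
  have hone : u • (α * y₁) + v • (α * y₂) - v • (β * y₁) - w • (β * y₂) = 1 := by
    have h := congrArg (algebraMap R K) hABC
    simp only [map_add, map_mul, map_one] at h
    simp only [Algebra.smul_def, hy₁α, hy₂α, hy₁β, hy₂β]
    linear_combination h
  rw [isUnit_iff_one_mem_mul_one_div, ← hone]
  exact sub_mem (sub_mem (add_mem (smul_mem _ u (mul_mem_mul hαa hy₁))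
    (smul_mem _ v (mul_mem_mul hαa hy₂))) (smul_mem _ v (mul_mem_mul hβa hy₁)))
    (smul_mem _ w (mul_mem_mul hβa hy₂))

end Submodule

theorem exists_int_relation_of_finrank_lt {V ι : Type*} [AddCommGroup V] [Module ℚ V]
    [FiniteDimensional ℚ V] [Fintype ι] (v : ι → V) (h : finrank ℚ V < Fintype.card ι) :
    ∃ c u : ι → ℤ, ∑ i, c i • v i = 0 ∧ ∑ i, c i * u i = 1 := by
  have hdep : ¬ LinearIndependent ℤ v := fun hv =>
    ((LinearIndependent.iff_fractionRing ℤ ℚ).mp hv).fintype_card_le_finrank.not_gt h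
  obtain ⟨g, hg, i, hi⟩ := Fintype.not_linearIndependent_iff.mp hdep
  obtain ⟨c, hgc, hc⟩ := Finset.extract_gcd g ⟨i, Finset.mem_univ i⟩
  obtain ⟨u, hu⟩ := Finset.gcd_eq_sum_mul Finset.univ c
  refine ⟨c, u, ?_, hc ▸ hu.symm⟩
  have hd : Finset.univ.gcd g ≠ 0 := fun h0 =>
    hi (Finset.gcd_eq_zero_iff.mp h0 i (Finset.mem_univ i))
  have hdc : Finset.univ.gcd g • ∑ i, c i • v i = 0 := by
    rw [Finset.smul_sum]
    simp_rw [smul_smul, ← hgc _ (Finset.mem_univ _)]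
    exact hg
  rw [← Int.cast_smul_eq_zsmul ℚ, smul_eq_zero, Int.cast_eq_zero] at hdc
  exact hdc.resolve_left hd

theorem Submodule.exists_int_smul_mem_of_span_rat_eq_top {V : Type*} [AddCommGroup V]
    [Module ℚ V] {L : Submodule ℤ V} (hL : span ℚ (L : Set V) = ⊤) (x : V) :
    ∃ n : ℤ, n ≠ 0 ∧ n • x ∈ L := by
  obtain ⟨⟨n, hn⟩, hnx⟩ := multiple_mem_span_of_mem_localization_span ℤ⁰ ℚ (L : Set V) x
    (hL ▸ mem_top)
  rw [span_eq] at hnx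
  exact ⟨n, nonZeroDivisors.ne_zero hn, hnx⟩

namespace Subalgebra

variable {K : Type*} [Field K]

theorem coe_one_submodule {R : Type*} [CommRing R] [Algebra R K] (O : Subalgebra R K) :
    ((1 : Submodule O K) : Set K) = O := by
  ext x
  simp [Submodule.mem_one]

variable [CharZero K] {O : Subalgebra ℤ K}

theorem isFractionRing_of_span_rat_eq_top (hO : span ℚ (O : Set K) = ⊤) :
    IsFractionRing O K := by
  refine IsFractionRing.of_field O K fun z => ?_
  obtain ⟨n, hn, hnz⟩ := exists_int_smul_mem_of_span_rat_eq_top (L := toSubmodule O) hO z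
  refine ⟨⟨n • z, hnz⟩, n, ?_⟩
  rw [map_intCast]
  change z = n • z / n
  rw [zsmul_eq_mul]
  field_simp

end Subalgebra

namespace Submodule

variable {K : Type*} [Field K] [CharZero K] {O : Subalgebra ℤ K}

theorem isLattice_restrictScalars_int (hOfg : (Subalgebra.toSubmodule O).FG)
    (hO : span ℚ (O : Set K) = ⊤) {a : Submodule O K} (ha : a ≠ ⊥) (hafg : a.FG) :
    IsLattice ℚ (a.restrictScalars ℤ) where
  fg := have : Module.Finite ℤ O := Module.Finite.iff_fg.mpr hOfg; hafg.restrictScalars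
  span_eq_top := eq_top_iff.mpr fun m _ => by
    obtain ⟨z₀, hz₀, hz₀ne⟩ := a.ne_bot_iff.mp ha
    obtain ⟨n, hn, hnm⟩ :=
      exists_int_smul_mem_of_span_rat_eq_top (L := Subalgebra.toSubmodule O) hO (m / z₀)
    have hmem : n • m ∈ a := by
      have h : n • (m / z₀) * z₀ ∈ a := a.smul_mem (⟨_, hnm⟩ : O) hz₀
      rwa [smul_mul_assoc, div_mul_cancel₀ m hz₀ne] at h
    have hm : m = (n : ℚ)⁻¹ • (n • m) := by
      rw [← Int.cast_smul_eq_zsmul ℚ, smul_smul, inv_mul_cancel₀ (Int.cast_ne_zero.mpr hn),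
        one_smul]
    rw [hm]
    exact smul_mem _ _ (subset_span hmem)

theorem isUnit_of_div_self_le_one_of_finrank_eq_two (hdeg : finrank ℚ K = 2)
    {a : Submodule O K} [IsLattice ℚ (a.restrictScalars ℤ)] (hproper : a / a ≤ 1) : IsUnit a := by
  have : FiniteDimensional ℚ K := Module.finite_of_finrank_eq_succ hdeg
  have hrank : finrank ℤ (a.restrictScalars ℤ) = 2 := by
    rw [← hdeg]
    exact congrArg Cardinal.toNat (IsLattice.rank' ℚ _)
  let b := Module.finBasisOfFinrankEq ℤ _ hrank
  set α : K := (b 0 : K)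
  set β : K := (b 1 : K)
  have hα : α ≠ 0 := fun h => b.ne_zero 0 (Subtype.ext h)
  have ha : a = span O {α, β} := by
    refine le_antisymm (fun z hz => ?_) (span_le.mpr ?_)
    · have h := congrArg Subtype.val (b.sum_repr ⟨z, hz⟩)
      simp only [Fin.sum_univ_two, coe_add, coe_smul_of_tower] at h
      rw [← h]
      exact add_mem (smul_of_tower_mem _ _ (subset_span (Set.mem_insert _ _)))
        (smul_of_tower_mem _ _ (subset_span (Set.mem_insert_of_mem _ rfl)))
    · simp only [Set.insert_subset_iff, Set.singleton_subset_iff]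
      exact ⟨(b 0).2, (b 1).2⟩
  obtain ⟨c, u, hrel, hcu⟩ :=
    exists_int_relation_of_finrank_lt ![β * β, α * β, α * α] (by simp [hdeg])
  simp only [Fin.sum_univ_three, Matrix.cons_val_zero, Matrix.cons_val_one,
    Matrix.cons_val_two, Matrix.tail_cons, Matrix.head_cons] at hrel hcu
  rw [ha] at hproper ⊢
  refine isUnit_span_pair_of_relation (A := c 0) (B := c 1) (C := c 2)
    (u := u 0) (v := u 1) (w := u 2) hα ?_ (by exact_mod_cast hcu) hproper
  simpa only [Int.cast_smul_eq_zsmul] using hrel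

end Submodule

theorem fractional_ideal_projective_iff_locally_principal_iff_proper_general
    (M : Type*) [Field M] [NumberField M]
    (hdeg : Module.finrank ℚ M = 2)
    (O : Subalgebra ℤ M) (hOfg : (Subalgebra.toSubmodule O).FG)
    (hOspan : Submodule.span ℚ (O : Set M) = ⊤)
    (a : Submodule O M) (ha0 : a ≠ ⊥) (hafg : a.FG) :
    (Module.Projective O a ↔
        ∀ P : Ideal O, P.IsMaximal →
          ∃ x ∈ a, ∀ y ∈ a, ∃ o s : O, s ∉ P ∧ s • y = o • x) ∧
      ((∀ P : Ideal O, P.IsMaximal →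
          ∃ x ∈ a, ∀ y ∈ a, ∃ o s : O, s ∉ P ∧ s • y = o • x) ↔
        {α : M | ∀ x ∈ a, α * x ∈ a} = (O : Set M)) := by
  have : IsFractionRing O M := Subalgebra.isFractionRing_of_span_rat_eq_top hOspan
  have : IsLattice ℚ (a.restrictScalars ℤ) :=
    isLattice_restrictScalars_int hOfg hOspan ha0 hafg
  have proper_iff : {α : M | ∀ x ∈ a, α * x ∈ a} = (O : Set M) ↔ a / a = 1 := by
    rw [← Subalgebra.coe_one_submodule]
    exact SetLike.coe_set_eq (p := a / a)
  have isUnit_of_proper (h : a / a = 1) : IsUnit a :=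
    isUnit_of_div_self_le_one_of_finrank_eq_two hdeg h.le
  refine ⟨⟨fun _ => IsLocallyPrincipal.of_isUnit (isUnit_of_projective ha0), fun h => ?_⟩,
    ⟨fun h => proper_iff.mpr (IsLocallyPrincipal.div_self_eq_one h ha0),
      fun h => IsLocallyPrincipal.of_isUnit (isUnit_of_proper (proper_iff.mp h))⟩⟩
  exact projective_of_isUnit (isUnit_of_proper (IsLocallyPrincipal.div_self_eq_one h ha0))

/-- Let `𝒪` be an order of an imaginary quadratic field `M` and `𝔞` a fractional
`𝒪`-ideal (a nonzero finitely generated `𝒪`-submodule of `M`). The following are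
equivalent: (1) `𝔞` is projective as an `𝒪`-module; (2) `𝔞` is locally principal, i.e.
its localization at every maximal ideal of `𝒪` is principal (generated by one element up
to denominators outside the maximal ideal); (3) `𝔞` is a proper `𝒪`-ideal, i.e.
`𝒪 = {α ∈ M : α𝔞 ⊆ 𝔞}`. -/
theorem fractional_ideal_projective_iff_locally_principal_iff_proper
    (M : Type*) [Field M] [NumberField M]
    (hdeg : Module.finrank ℚ M = 2) (him : ∀ _ : M →+* ℝ, False)
    (O : Subalgebra ℤ M) (hOfg : (Subalgebra.toSubmodule O).FG)
    (hOspan : Submodule.span ℚ (O : Set M) = ⊤)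
    (a : Submodule O M) (ha0 : a ≠ ⊥) (hafg : a.FG) :
    (Module.Projective O a ↔
        ∀ P : Ideal O, P.IsMaximal →
          ∃ x ∈ a, ∀ y ∈ a, ∃ o s : O, s ∉ P ∧ s • y = o • x) ∧
      ((∀ P : Ideal O, P.IsMaximal →
          ∃ x ∈ a, ∀ y ∈ a, ∃ o s : O, s ∉ P ∧ s • y = o • x) ↔
        {α : M | ∀ x ∈ a, α * x ∈ a} = (O : Set M)) :=
  fractional_ideal_projective_iff_locally_principal_iff_proper_general M hdeg O hOfg hOspan a ha0
    hafg
end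

section
/- Let μ be a W-valued p-adic measure on ℤ_p with power series Φ_μ(t), and let φ : ℤ/p^nℤ → W be any function, regarded as a locally constant function on ℤ_p. Then the measure φ·μ (defined by ∫ ψ d(φμ) = ∫ ψ(x)φ(x) dμ(x)) has power series Φ_{φμ}(t) = p^{−n} Σ_{b ∈ ℤ/p^nℤ} φ(b) Σ_{ζ ∈ μ_{p^n}} ζ^{−b} Φ_μ(ζ t), where μ_{p^n} denotes the group of p^n-th roots of unity (and W is assumed to contain them). -/
/-! `ψ j = ζ ^ j.val` is a primitive additive character of `ℤ/pⁿℤ`, and `e j = ψ (j · x mod pⁿ)`.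
Finite Fourier inversion on `ℤ/pⁿℤ`, `∑_{b,j} φ(b) ψ(-bj) ψ(jy) = pⁿ φ(y)`, writes `pⁿ φc` as a
`W`-linear combination of the `e j`; multiply by `binom k` and apply the linear functional `μ`. -/

open Finset

namespace AddChar.IsPrimitive

variable {R R' : Type*} [CommRing R] [Fintype R] [CommRing R'] [IsDomain R']
  {ψ : AddChar R R'}

theorem fourier_inversion (hψ : ψ.IsPrimitive) (f : R → R') (y : R) :
    ∑ b, ∑ j, f b * ψ (-(b * j)) * ψ (j * y) = Fintype.card R * f y := by
  classical
  have orthogonality (b : R) :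
      ∑ j, ψ (-(b * j)) * ψ (j * y) = if y = b then (Fintype.card R : R') else 0 := by
    calc _ = ∑ j, ψ (j * (y - b)) := sum_congr rfl fun j _ => by rw [← map_add_eq_mul]; ring_nf
      _ = _ := by rw [sum_mulShift _ hψ, sub_eq_zero, Nat.cast_ite, Nat.cast_zero]
  simp_rw [mul_assoc, ← mul_sum, orthogonality, mul_ite, mul_zero, sum_ite_eq, mem_univ,
    if_true, mul_comm]

end AddChar.IsPrimitive

theorem powerSeries_of_twisted_measure_general
    (p n : ℕ) [Fact p.Prime] (W : Type*) [NormedCommRing W]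
    [IsDomain W]
    (binom : ℕ → C(ℤ_[p], W))
    (ζ : W) (hζ : IsPrimitiveRoot ζ (p ^ n))
    (φ : ZMod (p ^ n) → W)
    (φc : C(ℤ_[p], W)) (hφc : ∀ x : ℤ_[p], φc x = φ (PadicInt.toZModPow n x))
    (e : ZMod (p ^ n) → C(ℤ_[p], W))
    (he : ∀ (j : ZMod (p ^ n)) (x : ℤ_[p]), e j x = ζ ^ (j * PadicInt.toZModPow n x).val)
    (μ ν : C(ℤ_[p], W) →L[W] W)
    (hν : ∀ ψ : C(ℤ_[p], W), ν ψ = μ (φc * ψ)) :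
    ∀ k : ℕ,
      ((p : W) ^ n) * ν (binom k) =
        ∑ b : ZMod (p ^ n), ∑ j : ZMod (p ^ n),
          φ b * ζ ^ ((-(b * j) : ZMod (p ^ n)).val) * μ (e j * binom k) := by
  intro k
  have : NeZero (p ^ n) := ⟨pow_ne_zero n (Fact.out : p.Prime).ne_zero⟩
  have hψ := AddChar.zmodChar_primitive_of_primitive_root (p ^ n) hζ
  have twisted_eq : ((p : W) ^ n) • (φc * binom k) = ∑ b, ∑ j,
      (φ b * ζ ^ ((-(b * j) : ZMod (p ^ n)).val)) • (e j * binom k) := by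
    ext x
    have inversion := hψ.fourier_inversion φ (PadicInt.toZModPow n x)
    simp only [AddChar.zmodChar_apply, ZMod.card, Nat.cast_pow] at inversion
    simp only [ContinuousMap.coe_sum, ContinuousMap.coe_smul, Finset.sum_apply, Pi.smul_apply,
      ContinuousMap.mul_apply, smul_eq_mul, he, hφc, ← mul_assoc, ← sum_mul, inversion]
  calc ((p : W) ^ n) * ν (binom k) = μ (((p : W) ^ n) • (φc * binom k)) := by
        rw [hν, map_smul, smul_eq_mul]
    _ = _ := by simp only [twisted_eq, map_sum, map_smul, smul_eq_mul]

/-- Let `μ` be a `W`-valued `p`-adic measure on `ℤ_p` with power series `Φ_μ(t)`, and let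
`φ : ℤ/pⁿℤ → W` be any function, regarded as a locally constant function on `ℤ_p`. Then
the measure `φ·μ` has power series
`Φ_{φμ}(t) = p^{−n} Σ_{b} φ(b) Σ_{ζ ∈ μ_{pⁿ}} ζ^{−b} Φ_μ(ζt)` (stated with the
denominator `pⁿ` cleared). The substituted series `Φ_μ(ζ^j t)` is encoded via its
binomial coefficients: its `k`-th coefficient is `∫ ζ^{jx}·binom(x,k) dμ(x)`, where
`ζ^{jx}` is the continuous function `e j`. -/
theorem powerSeries_of_twisted_measure
    (p n : ℕ) [Fact p.Prime] (W : Type*) [NormedCommRing W] [CompleteSpace W]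
    [IsDomain W] [IsDiscreteValuationRing W]
    (hna : IsNonarchimedean (norm : W → ℝ)) (hball : ∀ x : W, ‖x‖ ≤ 1)
    (hp : ‖((p : ℕ) : W)‖ < 1)
    (binom : ℕ → C(ℤ_[p], W))
    (hbinom : ∀ n' k : ℕ, binom n' ((k : ℕ) : ℤ_[p]) = ((Nat.choose k n' : ℕ) : W))
    (ζ : W) (hζ : IsPrimitiveRoot ζ (p ^ n))
    (φ : ZMod (p ^ n) → W)
    (φc : C(ℤ_[p], W)) (hφc : ∀ x : ℤ_[p], φc x = φ (PadicInt.toZModPow n x))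
    (e : ZMod (p ^ n) → C(ℤ_[p], W))
    (he : ∀ (j : ZMod (p ^ n)) (x : ℤ_[p]), e j x = ζ ^ (j * PadicInt.toZModPow n x).val)
    (μ ν : C(ℤ_[p], W) →L[W] W)
    (hν : ∀ ψ : C(ℤ_[p], W), ν ψ = μ (φc * ψ)) :
    ∀ k : ℕ,
      ((p : W) ^ n) * ν (binom k) =
        ∑ b : ZMod (p ^ n), ∑ j : ZMod (p ^ n),
          φ b * ζ ^ ((-(b * j) : ZMod (p ^ n)).val) * μ (e j * binom k) :=
  powerSeries_of_twisted_measure_general p n W binom ζ hζ φ φc hφc e he μ ν hν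
end
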